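/- Let A and B be n × n symmetric PSD matrices and σ² > 0. Then log det(I + σ^{-2}(A + B)) ≤ log det(I + σ^{-2}A) + log det(I + σ^{-2}B). -/

import Mathlib

/-!
Put `M = 1 + A`. Sylvester's identity `det (1 + X Y) = det (1 + Y X)` gives
`det (M + B) = det M * det (1 + √B M⁻¹ √B)`. Since `M⁻¹ ≤ 1` in the Loewner order, conjugating by
`√B` gives `√B M⁻¹ √B ≤ B`, and the determinant is monotone on positive definite matrices, so
`det (1 + √B M⁻¹ √B) ≤ det (1 + B)`.
-/

open Matrix

namespace Matrix

open scoped MatrixOrder ComplexOrder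

variable {n 𝕜 : Type*} [Fintype n] [DecidableEq n] [RCLike 𝕜]

theorem PosSemidef.one_le_det_one_add {R : Matrix n n 𝕜} (hR : R.PosSemidef) :
    1 ≤ (1 + R).det := by
  rw [hR.1.spectral_theorem, Unitary.conjStarAlgAut_apply, det_one_add_mul_comm, ← mul_assoc,
    Unitary.coe_star_mul_self, one_mul, ← diagonal_one, diagonal_add, det_diagonal]
  exact Finset.one_le_prod fun i _ => by simpa using hR.eigenvalues_nonneg i

theorem PosSemidef.sqrt_mul_mul_sqrt {C R : Matrix n n 𝕜} (hC : C.PosSemidef) :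
    (CFC.sqrt R * C * CFC.sqrt R).PosSemidef :=
  nonneg_iff_posSemidef.mp (conjugate_nonneg_of_nonneg hC.nonneg (CFC.sqrt_nonneg R))

theorem PosDef.det_add_eq_det_mul_det_one_add_sqrt {P R : Matrix n n 𝕜} (hP : P.PosDef)
    (hR : R.PosSemidef) :
    (P + R).det = P.det * (1 + CFC.sqrt R * P⁻¹ * CFC.sqrt R).det := by
  have hPR : P + R = P * (1 + P⁻¹ * CFC.sqrt R * CFC.sqrt R) := by
    rw [mul_add, mul_one, mul_assoc, CFC.sqrt_mul_sqrt_self R hR.nonneg, ← mul_assoc,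
      mul_nonsing_inv P hP.det_pos.ne'.isUnit, one_mul]
  rw [hPR, det_mul, det_one_add_mul_comm, mul_assoc]

theorem PosDef.det_le_det_of_le {P Q : Matrix n n 𝕜} (hP : P.PosDef) (hPQ : P ≤ Q) :
    P.det ≤ Q.det := by
  rw [← add_sub_cancel P Q, hP.det_add_eq_det_mul_det_one_add_sqrt (le_iff.mp hPQ)]
  exact le_mul_of_one_le_right hP.det_pos.le hP.inv.posSemidef.sqrt_mul_mul_sqrt.one_le_det_one_add

theorem PosSemidef.inv_one_add_le_one {A : Matrix n n 𝕜} (hA : A.PosSemidef) :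
    (1 + A)⁻¹ ≤ 1 := by
  set M := 1 + A
  have hM : M.PosDef := PosDef.one.add_posSemidef hA
  have hAM : A * M = A + A * A := by rw [mul_add, mul_one]
  have hMA : M - 1 = A := add_sub_cancel_left 1 A
  have key : M⁻¹ * (A + A * A) * M⁻¹ = 1 - M⁻¹ := by
    calc M⁻¹ * (A + A * A) * M⁻¹ = M⁻¹ * (M - 1) * (M * M⁻¹) := by
          rw [← hAM, hMA, mul_assoc, mul_assoc, mul_assoc]
      _ = 1 - M⁻¹ := by
          rw [mul_nonsing_inv M hM.det_pos.ne'.isUnit, mul_one, mul_sub,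
            nonsing_inv_mul M hM.det_pos.ne'.isUnit, mul_one]
  rw [← sub_nonneg, ← key]
  exact conjugate_nonneg_of_nonneg
    (add_nonneg hA.nonneg (IsSelfAdjoint.of_nonneg hA.nonneg).mul_self_nonneg)
    hM.inv.posSemidef.nonneg

theorem PosSemidef.det_one_add_add_le {A B : Matrix n n 𝕜}
    (hA : A.PosSemidef) (hB : B.PosSemidef) :
    (1 + (A + B)).det ≤ (1 + A).det * (1 + B).det := by
  have hM : (1 + A).PosDef := PosDef.one.add_posSemidef hA
  have hconj : CFC.sqrt B * (1 + A)⁻¹ * CFC.sqrt B ≤ B := by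
    simpa [CFC.sqrt_mul_sqrt_self B hB.nonneg] using
      conjugate_le_conjugate_of_nonneg hA.inv_one_add_le_one (CFC.sqrt_nonneg B)
  rw [← add_assoc, hM.det_add_eq_det_mul_det_one_add_sqrt hB]
  refine mul_le_mul_of_nonneg_left (PosDef.det_le_det_of_le ?_ (add_le_add_right hconj 1))
    hM.det_pos.le
  exact PosDef.one.add_posSemidef hM.inv.posSemidef.sqrt_mul_mul_sqrt

end Matrix

/-- Subadditivity of the log-determinant information measure:
`log det (I + σ⁻²(A + B)) ≤ log det (I + σ⁻²A) + log det (I + σ⁻²B)`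
for PSD matrices `A`, `B`. -/
theorem logdet_subadditive {n : ℕ} (A B : Matrix (Fin n) (Fin n) ℝ)
    (hA : A.PosSemidef) (hB : B.PosSemidef) (σ2 : ℝ) (hσ : 0 < σ2) :
    Real.log ((1 : Matrix (Fin n) (Fin n) ℝ) + σ2⁻¹ • (A + B)).det ≤
      Real.log ((1 : Matrix (Fin n) (Fin n) ℝ) + σ2⁻¹ • A).det +
      Real.log ((1 : Matrix (Fin n) (Fin n) ℝ) + σ2⁻¹ • B).det := by
  have hA' := hA.smul (inv_nonneg.mpr hσ.le)
  have hB' := hB.smul (inv_nonneg.mpr hσ.le)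
  have det_pos {R : Matrix (Fin n) (Fin n) ℝ} (hR : R.PosSemidef) : 0 < (1 + R).det :=
    (PosDef.one.add_posSemidef hR).det_pos
  rw [smul_add, ← Real.log_mul (det_pos hA').ne' (det_pos hB').ne']
  exact Real.log_le_log (det_pos (hA'.add hB')) (hA'.det_one_add_add_le hB')
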